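/- arXiv:1609.09576 — 3 statements merged into one kernel-verified Lean document; each statement's English description precedes it below -/
import Mathlib

section
/- Let n ≥ 2 and let n₁,…,n_s ≥ 2 be divisors of n with s ≥ 3, and suppose there exist l₁,…,l_s ∈ {1,…,n−1} such that l₁+⋯+l_s ≡ 0 (mod n), gcd(n, l_j) = n/n_j for all j, and gcd(n, l₁,…,l_s) = 1. Then for every j, lcm(n₁,…,n_{j−1}, n_{j+1},…,n_s) = n. -/
/-- One direction of Harvey's criterion: given exponents `l j` satisfying the
cyclic `n`-gonal conditions, each "erase one" lcm of the branch orders equals `n`. -/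
theorem harvey_lcm_condition (n s : ℕ) (hn : 2 ≤ n) (hs : 3 ≤ s)
    (nd : Fin s → ℕ) (hnd2 : ∀ j, 2 ≤ nd j) (hnddvd : ∀ j, nd j ∣ n)
    (l : Fin s → ℕ) (hl1 : ∀ j, 1 ≤ l j) (hl2 : ∀ j, l j ≤ n - 1)
    (hsum : n ∣ ∑ j, l j)
    (hgcd : ∀ j, Nat.gcd n (l j) = n / nd j)
    (hgcdall : Nat.gcd n (Finset.univ.gcd l) = 1) :
    ∀ j : Fin s, Finset.lcm (Finset.univ.erase j) nd = n := by
  intro j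
  have hn0 : n ≠ 0 := by omega
  have hLdvd : Finset.lcm (Finset.univ.erase j) nd ∣ n :=
    Finset.lcm_dvd fun i _ => hnddvd i
  have hL0 : Finset.lcm (Finset.univ.erase j) nd ≠ 0 := by
    intro h; rw [h] at hLdvd; exact hn0 (Nat.eq_zero_of_zero_dvd hLdvd)
  refine Nat.dvd_antisymm hLdvd ?_
  rw [← Nat.factorization_le_iff_dvd hn0 hL0, Finsupp.le_def]
  intro p
  by_cases hp : p.Prime
  · by_cases hpn : p ∣ n
    · -- find i ≠ j with p ∤ l i
      have hex : ∃ i ∈ Finset.univ.erase j, ¬ p ∣ l i := by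
        by_contra h
        push_neg at h
        have h1 : p ∣ ∑ i ∈ Finset.univ.erase j, l i := Finset.dvd_sum h
        have h2 : p ∣ l j + ∑ i ∈ Finset.univ.erase j, l i := by
          rw [Finset.add_sum_erase _ _ (Finset.mem_univ j)]
          exact hpn.trans hsum
        have hplj : p ∣ l j := (Nat.dvd_add_left h1).mp h2
        have hall : p ∣ Finset.univ.gcd l := by
          refine Finset.dvd_gcd fun i _ => ?_
          by_cases hij : i = j
          · exact hij ▸ hplj
          · exact h i (Finset.mem_erase.mpr ⟨hij, Finset.mem_univ i⟩)
        have : p ∣ 1 := hgcdall ▸ Nat.dvd_gcd hpn hall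
        exact hp.one_lt.ne' (Nat.dvd_one.mp this)
      obtain ⟨i, hi, hpl⟩ := hex
      have hnd0 : nd i ≠ 0 := by have := hnd2 i; omega
      have hg0 : Nat.gcd n (l i) ≠ 0 := fun h => hn0 (Nat.eq_zero_of_gcd_eq_zero_left h)
      have hmul : nd i * Nat.gcd n (l i) = n := by
        rw [hgcd i, Nat.mul_div_cancel' (hnddvd i)]
      have hpg : ¬ p ∣ Nat.gcd n (l i) := fun h => hpl (h.trans (Nat.gcd_dvd_right _ _))
      have key : n.factorization p = (nd i).factorization p := by
        have := Nat.factorization_mul hnd0 hg0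
        rw [← hmul, this, Finsupp.add_apply,
          Nat.factorization_eq_zero_of_not_dvd hpg, add_zero]
      rw [key]
      exact Finsupp.le_def.mp
        ((Nat.factorization_le_iff_dvd hnd0 hL0).mpr (Finset.dvd_lcm hi)) p
    · simp [Nat.factorization_eq_zero_of_not_dvd hpn]
  · simp [Nat.factorization_eq_zero_of_not_prime _ hp]
end

section
/- Let n ≥ 2, s ≥ 3, and l₁,…,l_s ∈ {1,…,n−1} with l₁+⋯+l_s ≡ 0 (mod n) and gcd(n, l₁,…,l_s) = 1. Then the quantity g = 1 + ((s−2)n − Σ_{j=1}^{s} gcd(n, l_j))/2 is a nonnegative integer, i.e., (s−2)n − Σ_{j=1}^{s} gcd(n, l_j) is even and ≥ −2. -/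
/-- `a + b + c ≤ a*b*c + 2` for positive naturals. -/
lemma genus_aux_three_ineq (a b c : ℕ) (ha : 1 ≤ a) (hb : 1 ≤ b) (hc : 1 ≤ c) :
    a + b + c ≤ a * b * c + 2 := by
  obtain ⟨a', rfl⟩ := Nat.exists_eq_add_of_le ha
  obtain ⟨b', rfl⟩ := Nat.exists_eq_add_of_le hb
  obtain ⟨c', rfl⟩ := Nat.exists_eq_add_of_le hc
  ring_nf
  nlinarith [Nat.zero_le (a' * b'), Nat.zero_le (a' * c'), Nat.zero_le (b' * c'),
    Nat.zero_le (a' * b' * c')]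

/-- If `n ∣ a + b + c` then `gcd (gcd n a) (gcd n b) ∣ gcd n c`. -/
lemma genus_aux_gcd_pair (n a b c : ℕ) (h : n ∣ a + b + c) :
    Nat.gcd (Nat.gcd n a) (Nat.gcd n b) ∣ Nat.gcd n c := by
  set g := Nat.gcd (Nat.gcd n a) (Nat.gcd n b) with hg
  have hgn : g ∣ n := (Nat.gcd_dvd_left _ _).trans (Nat.gcd_dvd_left _ _)
  have hga : g ∣ a := (Nat.gcd_dvd_left _ _).trans (Nat.gcd_dvd_right _ _)
  have hgb : g ∣ b := (Nat.gcd_dvd_right _ _).trans (Nat.gcd_dvd_right _ _)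
  have hgsum : g ∣ a + b + c := hgn.trans h
  have hgc : g ∣ c := by
    have := Nat.dvd_sub hgsum (Nat.dvd_add hga hgb)
    simpa using this
  exact Nat.dvd_gcd hgn hgc

/-- Integrality and nonnegativity of the genus formula for cyclic `n`-gonal curves:
`(s-2)n - Σ gcd(n, l_j)` is even and at least `-2`. -/
theorem genus_formula_integral_nonneg (n s : ℕ) (hn : 2 ≤ n) (hs : 3 ≤ s)
    (l : Fin s → ℕ) (hl1 : ∀ j, 1 ≤ l j) (hl2 : ∀ j, l j ≤ n - 1)
    (hsum : n ∣ ∑ j, l j) (hgcd : Nat.gcd n (Finset.univ.gcd l) = 1) :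
    Even (((s : ℤ) - 2) * n - ∑ j, (Nat.gcd n (l j) : ℤ)) ∧
    (-2 : ℤ) ≤ ((s : ℤ) - 2) * n - ∑ j, (Nat.gcd n (l j) : ℤ) := by
  have hn0 : 0 < n := by omega
  have hdvd : ∀ j, Nat.gcd n (l j) ∣ n := fun j => Nat.gcd_dvd_left _ _
  have hdl : ∀ j, Nat.gcd n (l j) ∣ l j := fun j => Nat.gcd_dvd_right _ _
  have hdlt : ∀ j, Nat.gcd n (l j) < n := by
    intro j
    have h1 : Nat.gcd n (l j) ≤ l j := Nat.le_of_dvd (hl1 j) (hdl j)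
    have h2 := hl2 j
    omega
  have hdpos : ∀ j, 1 ≤ Nat.gcd n (l j) := fun j => Nat.gcd_pos_of_pos_left _ hn0
  -- Key inequality in ℕ
  have key : (∑ j, Nat.gcd n (l j)) ≤ (s - 2) * n + 2 := by
    rcases Nat.lt_or_ge s 4 with h4 | h4
    · -- s = 3
      have hs3 : s = 3 := by omega
      subst hs3
      have hsum3 : n ∣ l 0 + l 1 + l 2 := by
        rwa [Fin.sum_univ_three] at hsum
      have hcop : ∀ i j k : Fin 3, n ∣ l i + l j + l k →
          Nat.gcd (Nat.gcd n (l i)) (Nat.gcd n (l j)) ∣ Nat.gcd n (l k) :=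
        fun i j k h => genus_aux_gcd_pair n (l i) (l j) (l k) h
      have hone : ∀ i j k : Fin 3, n ∣ l i + l j + l k →
          ({i, j, k} : Finset (Fin 3)) = Finset.univ →
          Nat.Coprime (Nat.gcd n (l i)) (Nat.gcd n (l j)) := by
        intro i j k hijk huniv
        set g := Nat.gcd (Nat.gcd n (l i)) (Nat.gcd n (l j)) with hg
        have hgn : g ∣ n := (Nat.gcd_dvd_left _ _).trans (Nat.gcd_dvd_left _ _)
        have hgi : g ∣ l i := (Nat.gcd_dvd_left _ _).trans (Nat.gcd_dvd_right _ _)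
        have hgj : g ∣ l j := (Nat.gcd_dvd_right _ _).trans (Nat.gcd_dvd_right _ _)
        have hgk : g ∣ l k := (hcop i j k hijk).trans (Nat.gcd_dvd_right _ _)
        have hgG : g ∣ Finset.univ.gcd l := by
          apply Finset.dvd_gcd
          intro x hx
          rw [← huniv] at hx
          simp only [Finset.mem_insert, Finset.mem_singleton] at hx
          rcases hx with rfl | rfl | rfl <;> assumption
        have : g ∣ 1 := hgcd ▸ Nat.dvd_gcd hgn hgG
        exact Nat.dvd_one.mp this
      have cop01 : Nat.Coprime (Nat.gcd n (l 0)) (Nat.gcd n (l 1)) :=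
        hone 0 1 2 hsum3 (by decide)
      have cop02 : Nat.Coprime (Nat.gcd n (l 0)) (Nat.gcd n (l 2)) :=
        hone 0 2 1 (by rwa [show l 0 + l 2 + l 1 = l 0 + l 1 + l 2 by ring]) (by decide)
      have cop12 : Nat.Coprime (Nat.gcd n (l 1)) (Nat.gcd n (l 2)) :=
        hone 1 2 0 (by rwa [show l 1 + l 2 + l 0 = l 0 + l 1 + l 2 by ring]) (by decide)
      have h01 : Nat.gcd n (l 0) * Nat.gcd n (l 1) ∣ n :=
        Nat.Coprime.mul_dvd_of_dvd_of_dvd cop01 (hdvd 0) (hdvd 1)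
      have cop012 : Nat.Coprime (Nat.gcd n (l 0) * Nat.gcd n (l 1)) (Nat.gcd n (l 2)) :=
        Nat.Coprime.mul cop02 cop12
      have h012 : Nat.gcd n (l 0) * Nat.gcd n (l 1) * Nat.gcd n (l 2) ∣ n :=
        Nat.Coprime.mul_dvd_of_dvd_of_dvd cop012 h01 (hdvd 2)
      have hprod : Nat.gcd n (l 0) * Nat.gcd n (l 1) * Nat.gcd n (l 2) ≤ n :=
        Nat.le_of_dvd hn0 h012
      have hineq := genus_aux_three_ineq _ _ _ (hdpos 0) (hdpos 1) (hdpos 2)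
      rw [Fin.sum_univ_three]
      omega
    · -- s ≥ 4
      have h2d : ∀ j, 2 * Nat.gcd n (l j) ≤ n := by
        intro j
        obtain ⟨k, hk⟩ := hdvd j
        have hk2 : 2 ≤ k := by
          rcases k with _ | _ | k
          · omega
          · have := hdlt j; omega
          · omega
        calc 2 * Nat.gcd n (l j) ≤ Nat.gcd n (l j) * k := by nlinarith [hdpos j]
          _ = n := hk.symm
      have hsumle : 2 * (∑ j, Nat.gcd n (l j)) ≤ s * n := by
        rw [Finset.mul_sum]
        calc (∑ j, 2 * Nat.gcd n (l j)) ≤ ∑ _j : Fin s, n :=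
              Finset.sum_le_sum fun j _ => h2d j
          _ = s * n := by simp [Finset.sum_const, mul_comm]
      have hsn : s * n ≤ 2 * ((s - 2) * n + 2) := by
        have h1 : s ≤ 2 * (s - 2) := by omega
        calc s * n ≤ 2 * (s - 2) * n := Nat.mul_le_mul_right n h1
          _ ≤ 2 * ((s - 2) * n + 2) := by ring_nf; omega
      exact Nat.le_of_mul_le_mul_left (hsumle.trans hsn) (by norm_num)
  -- Evenness
  have heven : Even (((s : ℤ) - 2) * n - ∑ j, (Nat.gcd n (l j) : ℤ)) := by
    rw [Int.even_sub]
    rcases Nat.even_or_odd n with hne | hno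
    · -- n even: both sides even
      have hln : Even (∑ j, l j) := by
        obtain ⟨k, hk⟩ := hsum
        exact hk ▸ hne.mul_right k
      have hpair : ∀ j, Even (Nat.gcd n (l j) + l j) := by
        intro j
        refine (Nat.even_add).mpr ⟨fun hd => ?_, fun hle => ?_⟩
        · exact even_iff_two_dvd.mpr (hd.two_dvd.trans (hdl j))
        · exact even_iff_two_dvd.mpr (Nat.dvd_gcd hne.two_dvd hle.two_dvd)
      have hsd : Even (∑ j, Nat.gcd n (l j)) := by
        have h1 : Even (∑ j, (Nat.gcd n (l j) + l j)) :=
          Finset.even_sum _ fun j _ => hpair j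
        rw [Finset.sum_add_distrib] at h1
        rcases Nat.even_add.mp h1 with h2
        exact h2.mpr hln
      constructor
      · intro _
        rw [← Nat.cast_sum]
        exact (Int.even_coe_nat _).mpr hsd
      · intro _
        have : Even ((n : ℤ)) := (Int.even_coe_nat _).mpr hne
        exact this.mul_left _
    · -- n odd
      have hdo : ∀ j, Odd (Nat.gcd n (l j)) := by
        intro j
        rw [← Nat.not_even_iff_odd]
        intro hd
        exact (Nat.not_even_iff_odd.mpr hno) (even_iff_two_dvd.mpr (hd.two_dvd.trans (hdvd j)))
      have hsiff : Even (∑ j, Nat.gcd n (l j)) ↔ Even s := by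
        have h1 : Even (∑ j, (Nat.gcd n (l j) + 1)) :=
          Finset.even_sum _ fun j _ => (hdo j).add_one
        rw [Finset.sum_add_distrib, Finset.sum_const, Finset.card_univ,
          Fintype.card_fin, smul_eq_mul, mul_one] at h1
        exact Nat.even_add.mp h1
      constructor
      · intro hL
        rw [← Nat.cast_sum, Int.even_coe_nat, hsiff]
        rcases Int.even_mul.mp hL with h | h
        · have : Even ((s : ℤ)) := by
            rcases Int.even_sub.mp h with h2
            exact h2.mpr (by norm_num)
          exact (Int.even_coe_nat s).mp this
        · exact absurd ((Int.even_coe_nat n).mp h) (Nat.not_even_iff_odd.mpr hno)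
      · intro hR
        rw [← Nat.cast_sum, Int.even_coe_nat, hsiff] at hR
        have hse : Even ((s : ℤ) - 2) := by
          rw [Int.even_sub]
          exact ⟨fun _ => by norm_num, fun _ => (Int.even_coe_nat s).mpr hR⟩
        exact hse.mul_right _
  refine ⟨heven, ?_⟩
  have hkey' : ((∑ j, Nat.gcd n (l j) : ℕ) : ℤ) ≤ ((s : ℤ) - 2) * n + 2 := by
    have h1 : (((s - 2) * n + 2 : ℕ) : ℤ) = ((s : ℤ) - 2) * n + 2 := by
      push_cast [Nat.sub_add_cancel]
      rw [Nat.cast_sub (by omega : 2 ≤ s)]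
      push_cast; ring
    calc ((∑ j, Nat.gcd n (l j) : ℕ) : ℤ) ≤ (((s - 2) * n + 2 : ℕ) : ℤ) := by
          exact_mod_cast key
      _ = _ := h1
  rw [Nat.cast_sum] at hkey'
  linarith
end

section
/- Let n ≥ 3, l₁, l₂ ∈ {1,…,n−1} with l₁ + l₂ = n, and a ∈ ℂ with a^n ∉ {0, 1}. On the curve X: y^n = (x^n − 1)^{l₁}(x^n − a^n)^{l₂}, the map α(x, y) = (ω_n·a/x, −a^{l₂}(x^n − 1)(x^n − a^n)/(x^n·y)) maps points of X (with x ≠ 0, y ≠ 0) to points of X, and α does not commute with η(x,y) = (ω_n x, y). -/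
open Complex

/-! Since `ωⁿ = 1`, the `x`-coordinate of `α` satisfies `(ωa/x)ⁿ = aⁿ/xⁿ`, so with `u = xⁿ`
preservation of `X` is a rational identity in `u`, `a` and `y`; it holds because
`((u - 1)(u - aⁿ))ⁿ = (u - 1)^{l₂} (u - aⁿ)^{l₁} yⁿ` on `X` when `l₁ + l₂ = n`.
Non-commutation is seen on the `x`-coordinate at `(1, 1)`: `α ∘ η` gives `a`, `η ∘ α` gives `ω²a`. -/

theorem alpha_snd_pow_eq {K : Type*} [Field K] {l₁ l₂ : ℕ} {a u y : K}
    (hu : u ≠ 0) (hy : y ≠ 0)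
    (hX : y ^ (l₁ + l₂) = (u - 1) ^ l₁ * (u - a ^ (l₁ + l₂)) ^ l₂) :
    (-(a ^ l₂) * (u - 1) * (u - a ^ (l₁ + l₂)) / (u * y)) ^ (l₁ + l₂) =
      (a ^ (l₁ + l₂) / u - 1) ^ l₁ * (a ^ (l₁ + l₂) / u - a ^ (l₁ + l₂)) ^ l₂ := by
  set A := a ^ (l₁ + l₂) with hA
  have key : ((u - 1) * (u - A)) ^ (l₁ + l₂) =
      (u - 1) ^ l₂ * (u - A) ^ l₁ * y ^ (l₁ + l₂) := by
    rw [hX, mul_pow, pow_add (u - 1), pow_add (u - A)]; ring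
  have h₁ : A / u - 1 = -u⁻¹ * (u - A) := by field_simp; ring
  have h₂ : A / u - A = -u⁻¹ * A * (u - 1) := by field_simp; ring
  calc _ = (-u⁻¹ * a ^ l₂) ^ (l₁ + l₂) * ((u - 1) * (u - A)) ^ (l₁ + l₂) *
        (y ^ (l₁ + l₂))⁻¹ := by
          rw [← inv_pow, ← mul_pow, ← mul_pow]; congr 1; field_simp
    _ = (-u⁻¹ * a ^ l₂) ^ (l₁ + l₂) * (u - 1) ^ l₂ * (u - A) ^ l₁ := by
          rw [key]; field_simp
    _ = _ := by rw [h₁, h₂, hA]; simp only [mul_pow]; ring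

theorem comp_ne_comp_of_sq_ne_one {K : Type*} [Field K] {ω a : K} (hω0 : ω ≠ 0)
    (hω : ω ^ 2 ≠ 1) (ha : a ≠ 0) (g : K × K → K) :
    (fun p : K × K => (ω * a / p.1, g p)) ∘ (fun p : K × K => (ω * p.1, p.2)) ≠
      (fun p : K × K => (ω * p.1, p.2)) ∘ (fun p : K × K => (ω * a / p.1, g p)) := by
  intro h
  have h₁ := congrArg (fun f => (f (1, 1)).1) h
  simp only [Function.comp_apply, mul_one, div_one, mul_div_cancel_left₀ a hω0] at h₁
  exact hω (mul_right_cancel₀ ha (by linear_combination -h₁))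

theorem alpha_preserves_and_not_commutes_general (n l₁ l₂ : ℕ) (hn : 3 ≤ n)
    (hsum : l₁ + l₂ = n) (a : ℂ) (ha0 : a ^ n ≠ 0)
    (ω : ℂ) (hω : ω = Complex.exp (2 * (Real.pi : ℂ) * I / (n : ℂ))) :
    (∀ x y : ℂ, x ≠ 0 → y ≠ 0 →
      y ^ n = (x ^ n - 1) ^ l₁ * (x ^ n - a ^ n) ^ l₂ →
      (-(a ^ l₂) * (x ^ n - 1) * (x ^ n - a ^ n) / (x ^ n * y)) ^ n =
        ((ω * a / x) ^ n - 1) ^ l₁ * ((ω * a / x) ^ n - a ^ n) ^ l₂) ∧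
    ((fun p : ℂ × ℂ =>
        (ω * a / p.1,
          -(a ^ l₂) * (p.1 ^ n - 1) * (p.1 ^ n - a ^ n) / (p.1 ^ n * p.2))) ∘
      (fun p : ℂ × ℂ => (ω * p.1, p.2)) ≠
      (fun p : ℂ × ℂ => (ω * p.1, p.2)) ∘
      (fun p : ℂ × ℂ =>
        (ω * a / p.1,
          -(a ^ l₂) * (p.1 ^ n - 1) * (p.1 ^ n - a ^ n) / (p.1 ^ n * p.2)))) := by
  have hprim : IsPrimitiveRoot ω n := hω ▸ Complex.isPrimitiveRoot_exp n (by omega)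
  refine ⟨fun x y hx hy hX => ?_, comp_ne_comp_of_sq_ne_one (hprim.ne_zero (by omega))
    (hprim.pow_ne_one_of_pos_of_lt two_ne_zero (by omega)) (ne_zero_pow (by omega) ha0) _⟩
  have hαx : (ω * a / x) ^ n = a ^ n / x ^ n := by
    rw [div_pow, mul_pow, hprim.pow_eq_one, one_mul]
  rw [hαx]
  subst hsum
  exact alpha_snd_pow_eq (pow_ne_zero _ hx) hy hX

/-- On `X : yⁿ = (xⁿ−1)^{l₁}(xⁿ−aⁿ)^{l₂}` with `l₁+l₂ = n`, the map
`α(x,y) = (ω a/x, −a^{l₂}(xⁿ−1)(xⁿ−aⁿ)/(xⁿ y))` preserves `X` and does not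
commute with `η(x,y) = (ω x, y)` (here `ω = e^{2πi/n}`, `n ≥ 3`). -/
theorem alpha_preserves_and_not_commutes (n l₁ l₂ : ℕ) (hn : 3 ≤ n)
    (hl₁ : 1 ≤ l₁) (hl₁' : l₁ ≤ n - 1) (hl₂ : 1 ≤ l₂) (hl₂' : l₂ ≤ n - 1)
    (hsum : l₁ + l₂ = n) (a : ℂ) (ha0 : a ^ n ≠ 0) (ha1 : a ^ n ≠ 1)
    (ω : ℂ) (hω : ω = Complex.exp (2 * (Real.pi : ℂ) * I / (n : ℂ))) :
    (∀ x y : ℂ, x ≠ 0 → y ≠ 0 →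
      y ^ n = (x ^ n - 1) ^ l₁ * (x ^ n - a ^ n) ^ l₂ →
      (-(a ^ l₂) * (x ^ n - 1) * (x ^ n - a ^ n) / (x ^ n * y)) ^ n =
        ((ω * a / x) ^ n - 1) ^ l₁ * ((ω * a / x) ^ n - a ^ n) ^ l₂) ∧
    ((fun p : ℂ × ℂ =>
        (ω * a / p.1,
          -(a ^ l₂) * (p.1 ^ n - 1) * (p.1 ^ n - a ^ n) / (p.1 ^ n * p.2))) ∘
      (fun p : ℂ × ℂ => (ω * p.1, p.2)) ≠
      (fun p : ℂ × ℂ => (ω * p.1, p.2)) ∘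
      (fun p : ℂ × ℂ =>
        (ω * a / p.1,
          -(a ^ l₂) * (p.1 ^ n - 1) * (p.1 ^ n - a ^ n) / (p.1 ^ n * p.2)))) :=
  alpha_preserves_and_not_commutes_general n l₁ l₂ hn hsum a ha0 ω hω
end
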